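/- Let k ∈ ℝ, 0 ≤ σ < (k−1)/2, set β = (k−1)/2 − σ, and let δ > 0. Define f : (0,∞) → ℝ by f(ρ) = ((ρ/δ)/(1 + ρ/δ))^{2β} · ρ^{2σ}. Then for every ρ > 0, writing t = ρ/δ, one has −f''(ρ) + ((k−2)/ρ) f'(ρ) = 2β (f(ρ)/ρ²) · (t/(1+t)) · ( (2β+1)/(1+t) + 2σ ), and in particular −f''(ρ) + ((k−2)/ρ) f'(ρ) ≥ 4βσ (f(ρ)/ρ²) · (ρ/δ)/(1 + ρ/δ) ≥ 0. -/

import Mathlib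

/-!
On `(0, ∞)` the weight is `f(x) = x^(k-1) (δ + x)^(-2β)`, since `σ + β = (k-1)/2`. For any
`w(x) = x^a (δ + x)^b` the logarithmic derivative is `p = a/x + b/(δ+x)`, so `w'' = w (p² + p')`,
and for `a = k - 1` the operator `-w'' + ((k-2)/x) w'` reduces to
`w (b(1-b)/(δ+x)² - b(a+1)/(x(δ+x)))`. With `b = -2β` this is the claimed identity, whose
right-hand side is a sum of the nonnegative term `4βσ (f/ρ²) t/(1+t)` and another nonnegative term.
-/

open Filter Topology Set

noncomputable def powWeight (δ a b x : ℝ) : ℝ := x ^ a * (δ + x) ^ b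

namespace powWeight

variable {δ : ℝ} (a b : ℝ) {x : ℝ}

lemma nonneg (hδ : 0 ≤ δ) (hx : 0 < x) : 0 ≤ powWeight δ a b x := by
  unfold powWeight
  have : 0 < δ + x := by linarith
  positivity

lemma hasDerivAt (hδ : 0 ≤ δ) (hx : 0 < x) :
    HasDerivAt (powWeight δ a b) (powWeight δ a b x * (a / x + b / (δ + x))) x := by
  have hδx : 0 < δ + x := by linarith
  have hxa := Real.hasDerivAt_rpow_const (p := a) (Or.inl hx.ne')
  have hδxb := ((hasDerivAt_id' x).const_add δ).rpow_const (p := b) (Or.inl hδx.ne')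
  refine (hxa.mul hδxb).congr_deriv ?_
  rw [powWeight, Real.rpow_sub hx, Real.rpow_sub hδx, Real.rpow_one, Real.rpow_one]
  field_simp

lemma deriv_eqOn (hδ : 0 ≤ δ) :
    EqOn (deriv (powWeight δ a b)) (fun y ↦ powWeight δ a b y * (a / y + b / (δ + y))) (Ioi 0) :=
  fun _ hy ↦ (hasDerivAt a b hδ hy).deriv

lemma hasDerivAt_deriv (hδ : 0 ≤ δ) (hx : 0 < x) :
    HasDerivAt (deriv (powWeight δ a b))
      (powWeight δ a b x * ((a / x + b / (δ + x)) ^ 2 - a / x ^ 2 - b / (δ + x) ^ 2)) x := by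
  have hδx : δ + x ≠ 0 := by linarith
  have hlog : HasDerivAt (fun y ↦ a / y + b / (δ + y)) (-a / x ^ 2 - b / (δ + x) ^ 2) x := by
    refine (((hasDerivAt_const x a).fun_div (hasDerivAt_id' x) hx.ne').fun_add
      ((hasDerivAt_const x b).fun_div ((hasDerivAt_id' x).const_add δ) hδx)).congr_deriv ?_
    ring
  have hprod := (hasDerivAt a b hδ hx).mul hlog
  refine (hprod.congr_of_eventuallyEq ?_).congr_deriv (by ring)
  exact eventuallyEq_of_mem (Ioi_mem_nhds hx) (deriv_eqOn a b hδ)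

lemma neg_deriv_deriv_add_deriv (hδ : 0 ≤ δ) (hx : 0 < x) :
    -deriv (deriv (powWeight δ a b)) x + (a - 1) / x * deriv (powWeight δ a b) x =
      powWeight δ a b x * (b * (1 - b) / (δ + x) ^ 2 - b * (a + 1) / (x * (δ + x))) := by
  have hδx : δ + x ≠ 0 := by linarith
  rw [(hasDerivAt_deriv a b hδ hx).deriv, (hasDerivAt a b hδ hx).deriv]
  field_simp
  ring

end powWeight

lemma div_one_add_div_rpow_mul_rpow_eq_powWeight {δ : ℝ} (hδ : 0 < δ) (β σ : ℝ) {x : ℝ}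
    (hx : 0 < x) :
    ((x / δ) / (1 + x / δ)) ^ (2 * β) * x ^ (2 * σ) =
      powWeight δ (2 * β + 2 * σ) (-(2 * β)) x := by
  have hδx : 0 < δ + x := by linarith
  have ht : (x / δ) / (1 + x / δ) = x / (δ + x) := by field_simp
  rw [ht, powWeight, Real.rpow_add hx, Real.div_rpow hx.le hδx.le, Real.rpow_neg hδx.le,
    div_eq_mul_inv]
  ring

/-- For `0 ≤ σ < (k-1)/2` and `β = (k-1)/2 - σ`, the test weight
`f(ρ) = ((ρ/δ)/(1+ρ/δ))^{2β} ρ^{2σ}` satisfies, for every `ρ > 0` with `t = ρ/δ`,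
`-f'' + ((k-2)/ρ) f' = 2β (f/ρ²) (t/(1+t)) ((2β+1)/(1+t) + 2σ)`, and in particular
`-f'' + ((k-2)/ρ) f' ≥ 4βσ (f/ρ²) (t/(1+t)) ≥ 0`. -/
theorem radial_weight_nonneg (k σ δ : ℝ) (hσ0 : 0 ≤ σ) (hσ : σ < (k - 1) / 2)
    (hδ : 0 < δ) (β : ℝ) (hβ : β = (k - 1) / 2 - σ)
    (f : ℝ → ℝ)
    (hf : ∀ ρ : ℝ, f ρ = ((ρ / δ) / (1 + ρ / δ)) ^ (2 * β) * ρ ^ (2 * σ)) :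
    ∀ ρ > (0 : ℝ),
      (-(deriv (deriv f) ρ) + (k - 2) / ρ * deriv f ρ =
        2 * β * (f ρ / ρ ^ 2) * ((ρ / δ) / (1 + ρ / δ)) *
          ((2 * β + 1) / (1 + ρ / δ) + 2 * σ)) ∧
      4 * β * σ * (f ρ / ρ ^ 2) * ((ρ / δ) / (1 + ρ / δ)) ≤
        -(deriv (deriv f) ρ) + (k - 2) / ρ * deriv f ρ ∧
      0 ≤ 4 * β * σ * (f ρ / ρ ^ 2) * ((ρ / δ) / (1 + ρ / δ)) := by
  intro ρ hρ
  have hk : k = 2 * β + 2 * σ + 1 := by rw [hβ]; ring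
  have hβ0 : 0 < β := by rw [hβ]; linarith
  have hfw : f =ᶠ[𝓝 ρ] powWeight δ (2 * β + 2 * σ) (-(2 * β)) :=
    eventuallyEq_of_mem (Ioi_mem_nhds hρ) fun x hx ↦
      (hf x).trans (div_one_add_div_rpow_mul_rpow_eq_powWeight hδ β σ hx)
  have hf0 : 0 ≤ f ρ := hfw.eq_of_nhds ▸ powWeight.nonneg _ _ hδ.le hρ
  have identity : -(deriv (deriv f) ρ) + (k - 2) / ρ * deriv f ρ =
      2 * β * (f ρ / ρ ^ 2) * ((ρ / δ) / (1 + ρ / δ)) * ((2 * β + 1) / (1 + ρ / δ) + 2 * σ) := by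
    have hδρ : δ + ρ ≠ 0 := by linarith
    have hradial := powWeight.neg_deriv_deriv_add_deriv (2 * β + 2 * σ) (-(2 * β)) hδ.le hρ
    rw [hfw.deriv.deriv_eq, hfw.deriv_eq, hfw.eq_of_nhds, hk]
    rw [show 2 * β + 2 * σ + 1 - 2 = 2 * β + 2 * σ - 1 by ring, hradial]
    field_simp
    ring
  have hmain : 0 ≤ 4 * β * σ * (f ρ / ρ ^ 2) * ((ρ / δ) / (1 + ρ / δ)) := by positivity
  refine ⟨identity, ?_, hmain⟩
  have hrest : 0 ≤ 2 * β * (f ρ / ρ ^ 2) * ((ρ / δ) / (1 + ρ / δ)) *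
      ((2 * β + 1) / (1 + ρ / δ)) := by
    positivity
  rw [identity]
  linarith
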